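/- For four variables, define the Lancaster interaction Δ⁴_L pointwise by expanding the product ∏_{i=1}^{4}(P_i* − P_i) with the Lancaster substitution rules (so that Δ⁴_L = P₁₂₃₄ − Σ_i P_i P_{rest} + Σ_{i<j} P_i P_j P_{kl} − 3 P₁P₂P₃P₄, summed appropriately). If P₁₂₃₄ = P₁₂ ⊗ P₃₄ (the pair (X¹,X²) is independent of (X³,X⁴)), then Δ⁴_L(a,b,c,d) = (P₁₂(a,b) − P₁(a)P₂(b))·(P₃₄(c,d) − P₃(c)P₄(d)) for all a,b,c,d. In particular Δ⁴_L need not vanish under this two-block factorization. -/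
import Mathlib


open Finset

/-- for four variables, if `P₁₂₃₄ = P₁₂ ⊗ P₃₄` then the 4-th order
Lancaster interaction
`Δ⁴_L = P₁₂₃₄ − Σᵢ Pᵢ P_rest + Σ_{i<j} Pᵢ Pⱼ P_{kl} − 3 P₁P₂P₃P₄`
equals `(P₁₂ − P₁P₂)·(P₃₄ − P₃P₄)` pointwise. -/
theorem lancaster4_eq_product_of_two_block_factorization
    {α β γ δ : Type*} [Fintype α] [Fintype β] [Fintype γ] [Fintype δ]
    (P : α × β × γ × δ → ℝ) (hP : ∀ x, 0 ≤ P x) (hPsum : ∑ x, P x = 1)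
    (P1 : α → ℝ) (P2 : β → ℝ) (P3 : γ → ℝ) (P4 : δ → ℝ)
    (P12 : α × β → ℝ) (P13 : α × γ → ℝ) (P14 : α × δ → ℝ)
    (P23 : β × γ → ℝ) (P24 : β × δ → ℝ) (P34 : γ × δ → ℝ)
    (P123 : α × β × γ → ℝ) (P124 : α × β × δ → ℝ)
    (P134 : α × γ × δ → ℝ) (P234 : β × γ × δ → ℝ)
    (hP1 : ∀ a, P1 a = ∑ b, ∑ c, ∑ d, P (a, b, c, d))
    (hP2 : ∀ b, P2 b = ∑ a, ∑ c, ∑ d, P (a, b, c, d))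
    (hP3 : ∀ c, P3 c = ∑ a, ∑ b, ∑ d, P (a, b, c, d))
    (hP4 : ∀ d, P4 d = ∑ a, ∑ b, ∑ c, P (a, b, c, d))
    (hP12 : ∀ a b, P12 (a, b) = ∑ c, ∑ d, P (a, b, c, d))
    (hP13 : ∀ a c, P13 (a, c) = ∑ b, ∑ d, P (a, b, c, d))
    (hP14 : ∀ a d, P14 (a, d) = ∑ b, ∑ c, P (a, b, c, d))
    (hP23 : ∀ b c, P23 (b, c) = ∑ a, ∑ d, P (a, b, c, d))
    (hP24 : ∀ b d, P24 (b, d) = ∑ a, ∑ c, P (a, b, c, d))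
    (hP34 : ∀ c d, P34 (c, d) = ∑ a, ∑ b, P (a, b, c, d))
    (hP123 : ∀ a b c, P123 (a, b, c) = ∑ d, P (a, b, c, d))
    (hP124 : ∀ a b d, P124 (a, b, d) = ∑ c, P (a, b, c, d))
    (hP134 : ∀ a c d, P134 (a, c, d) = ∑ b, P (a, b, c, d))
    (hP234 : ∀ b c d, P234 (b, c, d) = ∑ a, P (a, b, c, d))
    (hfac : ∀ a b c d, P (a, b, c, d) = P12 (a, b) * P34 (c, d)) :
    ∀ a b c d,
      P (a, b, c, d)
        - P1 a * P234 (b, c, d) - P2 b * P134 (a, c, d)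
        - P3 c * P124 (a, b, d) - P4 d * P123 (a, b, c)
        + P1 a * P2 b * P34 (c, d) + P1 a * P3 c * P24 (b, d)
        + P1 a * P4 d * P23 (b, c) + P2 b * P3 c * P14 (a, d)
        + P2 b * P4 d * P13 (a, c) + P3 c * P4 d * P12 (a, b)
        - 3 * (P1 a * P2 b * P3 c * P4 d)
      = (P12 (a, b) - P1 a * P2 b) * (P34 (c, d) - P3 c * P4 d) := by
  intro a b c d
  have key : ∑ a, ∑ b, ∑ c, ∑ d, P (a, b, c, d) = 1 := by
    rw [← hPsum]; simp [Fintype.sum_prod_type]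
  have ht : ∑ a, ∑ b, P12 (a, b) = 1 := by
    simp only [hP12]; exact key
  have key2 : ∑ c, ∑ d, ∑ a, ∑ b, P (a, b, c, d) = 1 := by
    have e1 : (∑ cd : γ × δ, ∑ ab : α × β, P (ab.1, ab.2, cd.1, cd.2))
        = ∑ c, ∑ d, ∑ a, ∑ b, P (a, b, c, d) := by
      simp [Fintype.sum_prod_type]
    have e2 : (∑ ab : α × β, ∑ cd : γ × δ, P (ab.1, ab.2, cd.1, cd.2))
        = ∑ a, ∑ b, ∑ c, ∑ d, P (a, b, c, d) := by
      simp [Fintype.sum_prod_type]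
    rw [← e1, Finset.sum_comm, e2, key]
  have hs : ∑ c, ∑ d, P34 (c, d) = 1 := by
    simp only [hP34]; exact key2
  have h1 : P1 a = ∑ b', P12 (a, b') := by
    rw [hP1]; simp only [hfac, ← Finset.mul_sum, hs, mul_one]
  have h2 : P2 b = ∑ a', P12 (a', b) := by
    rw [hP2]; simp only [hfac, ← Finset.mul_sum, hs, mul_one]
  have h3 : P3 c = ∑ d', P34 (c, d') := by
    rw [hP3]; simp only [hfac, ← Finset.mul_sum, ← Finset.sum_mul, ht, one_mul]
  have h4 : P4 d = ∑ c', P34 (c', d) := by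
    rw [hP4]; simp only [hfac, ← Finset.mul_sum, ← Finset.sum_mul, ht, one_mul]
  have h13 : P13 (a, c) = (∑ b', P12 (a, b')) * (∑ d', P34 (c, d')) := by
    rw [hP13]; simp only [hfac, ← Finset.mul_sum, ← Finset.sum_mul]
  have h14 : P14 (a, d) = (∑ b', P12 (a, b')) * (∑ c', P34 (c', d)) := by
    rw [hP14]; simp only [hfac, ← Finset.mul_sum, ← Finset.sum_mul]
  have h23 : P23 (b, c) = (∑ a', P12 (a', b)) * (∑ d', P34 (c, d')) := by
    rw [hP23]; simp only [hfac, ← Finset.mul_sum, ← Finset.sum_mul]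
  have h24 : P24 (b, d) = (∑ a', P12 (a', b)) * (∑ c', P34 (c', d)) := by
    rw [hP24]; simp only [hfac, ← Finset.mul_sum, ← Finset.sum_mul]
  have h123 : P123 (a, b, c) = P12 (a, b) * (∑ d', P34 (c, d')) := by
    rw [hP123]; simp only [hfac, ← Finset.mul_sum]
  have h124 : P124 (a, b, d) = P12 (a, b) * (∑ c', P34 (c', d)) := by
    rw [hP124]; simp only [hfac, ← Finset.mul_sum]
  have h134 : P134 (a, c, d) = (∑ b', P12 (a, b')) * P34 (c, d) := by
    rw [hP134]; simp only [hfac, ← Finset.sum_mul]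
  have h234 : P234 (b, c, d) = (∑ a', P12 (a', b)) * P34 (c, d) := by
    rw [hP234]; simp only [hfac, ← Finset.sum_mul]
  rw [hfac, h1, h2, h3, h4, h13, h14, h23, h24, h123, h124, h134, h234]
  ring
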